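/- Weibull case bounded relative error (Proposition 3): let Y_1,...,Y_N be i.i.d. exponential with mean 1, 0 < α < 1, η > 0, λ_1,...,λ_L > 0 with ∑λ_k = 1, ℓ(γ) = P(∑_{k=1}^L (Y^{(k)})^{1/α} ≤ γ/η), ℓ_1(γ) = P(∑_{k=1}^L λ_k^{1−α} Y^{(k)} ≤ (γ/η)^α). Then limsup_{γ→0⁺} ℓ_1(γ)/ℓ(γ) ≤ L^{αN}/λ_1^{N(1−α)} < ∞. -/

import Mathlib

/-!
On the event that all `N` samples are at most `b`, the `L` largest ones are too, so
`∑_{k ≤ L} (Y^{(k)})^{1/α} ≤ L b^{1/α}`; with `b = (γ / (L η))^α` this gives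
`ℓ(γ) ≥ F((γ/η)^α / L^α)^N`, where `F(t) = 1 - e^{-t}` is the exponential CDF.
Conversely, the event of `ℓ₁(γ)` forces `λ₁^{1-α} Y^{(1)} ≤ (γ/η)^α`, hence all samples are at most
`(γ/η)^α / λ₁^{1-α}`, so `ℓ₁(γ) ≤ F((γ/η)^α / λ₁^{1-α})^N`. As `t → 0⁺`, `F(t/a) / F(t/b) → b/a`,
which bounds the limsup of the ratio by `(L^α / λ₁^{1-α})^N`.
-/

open MeasureTheory ProbabilityTheory Filter Set Topology

noncomputable section

/-- The `k`-th largest value (0-indexed) among `x 0, ..., x (N-1)`. -/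
def ordDesc {N : ℕ} (x : Fin N → ℝ) (k : Fin N) : ℝ := (x ∘ Tuple.sort x) k.rev

open Real

lemma gammaMeasure_Iio_zero (a r : ℝ) : gammaMeasure a r (Iio 0) = 0 := by
  rw [gammaMeasure, withDensity_apply _ measurableSet_Iio, lintegral_gammaPDF_of_nonpos le_rfl]

lemma expMeasure_Iic_of_nonneg {r x : ℝ} (hr : 0 < r) (hx : 0 ≤ x) :
    expMeasure r (Iic x) = ENNReal.ofReal (1 - exp (-(r * x))) := by
  have := isProbabilityMeasure_expMeasure hr
  rw [← ofReal_cdf, cdf_expMeasure_eq hr, if_pos hx]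

lemma ordDesc_mem_range {N : ℕ} (x : Fin N → ℝ) (k : Fin N) : ordDesc x k ∈ range x :=
  ⟨_, rfl⟩

lemma le_ordDesc_zero {N : ℕ} (x : Fin N → ℝ) (hN : 0 < N) (i : Fin N) :
    x i ≤ ordDesc x ⟨0, hN⟩ :=
  calc x i = (x ∘ Tuple.sort x) ((Tuple.sort x).symm i) := by simp
    _ ≤ ordDesc x ⟨0, hN⟩ := Tuple.monotone_sort x <| by
      rw [Fin.le_def, Fin.val_rev]
      exact Nat.le_sub_one_of_lt ((Tuple.sort x).symm i).isLt

lemma mul_le_of_sum_mul_ordDesc_le {N L : ℕ} (hLN : L ≤ N) (hL : 0 < L) {x : Fin N → ℝ}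
    (hx : ∀ i, 0 ≤ x i) {w : Fin L → ℝ} (hw : ∀ k, 0 ≤ w k) {t : ℝ}
    (h : ∑ k, w k * ordDesc x (Fin.castLE hLN k) ≤ t) (i : Fin N) :
    w ⟨0, hL⟩ * x i ≤ t :=
  calc w ⟨0, hL⟩ * x i ≤ w ⟨0, hL⟩ * ordDesc x (Fin.castLE hLN ⟨0, hL⟩) :=
        mul_le_mul_of_nonneg_left (le_ordDesc_zero x (hL.trans_le hLN) i) (hw _)
    _ ≤ ∑ k, w k * ordDesc x (Fin.castLE hLN k) := by
        refine Finset.single_le_sum (f := fun k => w k * ordDesc x (Fin.castLE hLN k))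
          (fun k _ => mul_nonneg (hw k) ?_) (Finset.mem_univ _)
        obtain ⟨j, hj⟩ := ordDesc_mem_range x (Fin.castLE hLN k)
        exact hj ▸ hx j
    _ ≤ t := h

lemma sum_ordDesc_rpow_le {N L : ℕ} (hLN : L ≤ N) {x : Fin N → ℝ} (hx : ∀ i, 0 ≤ x i) {b : ℝ}
    (hb : ∀ i, x i ≤ b) {p : ℝ} (hp : 0 ≤ p) :
    ∑ k : Fin L, ordDesc x (Fin.castLE hLN k) ^ p ≤ L * b ^ p :=
  calc ∑ k : Fin L, ordDesc x (Fin.castLE hLN k) ^ p ≤ ∑ _k : Fin L, b ^ p := by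
        refine Finset.sum_le_sum fun k _ => ?_
        obtain ⟨j, hj⟩ := ordDesc_mem_range x (Fin.castLE hLN k)
        exact rpow_le_rpow (hj ▸ hx j) (hj ▸ hb j) hp
    _ = L * b ^ p := by simp

section IIDExponential

variable {Ω : Type*} [MeasurableSpace Ω] {μ : Measure Ω} {N : ℕ} {Y : Fin N → Ω → ℝ}

lemma ae_forall_nonneg_of_map_eq_expMeasure (hYm : ∀ i, Measurable (Y i)) {r : ℝ}
    (hlaw : ∀ i, μ.map (Y i) = expMeasure r) : ∀ᵐ ω ∂μ, ∀ i, 0 ≤ Y i ω := by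
  refine ae_all_iff.2 fun i => ?_
  have hneg : μ (Y i ⁻¹' Iio 0) = 0 := by
    rw [← Measure.map_apply (hYm i) measurableSet_Iio, hlaw i]
    exact gammaMeasure_Iio_zero 1 r
  filter_upwards [measure_eq_zero_iff_ae_notMem.1 hneg] with ω hω using not_lt.1 hω

lemma measure_forall_le_eq_pow (hYm : ∀ i, Measurable (Y i)) (hind : iIndepFun Y μ)
    (hlaw : ∀ i, μ.map (Y i) = expMeasure 1) {a : ℝ} (ha : 0 ≤ a) :
    μ {ω | ∀ i, Y i ω ≤ a} = ENNReal.ofReal (1 - exp (-a)) ^ N := by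
  have hone : ∀ i, μ (Y i ⁻¹' Iic a) = ENNReal.ofReal (1 - exp (-a)) := fun i => by
    rw [← Measure.map_apply (hYm i) measurableSet_Iic, hlaw i,
      expMeasure_Iic_of_nonneg one_pos ha, one_mul]
  have hset : {ω | ∀ i, Y i ω ≤ a} = ⋂ i, Y i ⁻¹' Iic a := by ext; simp
  rw [hset, hind.meas_iInter fun i => ⟨Iic a, measurableSet_Iic, rfl⟩]
  simp [hone]

lemma measure_sum_mul_ordDesc_le_le_pow (hYm : ∀ i, Measurable (Y i)) (hind : iIndepFun Y μ)
    (hlaw : ∀ i, μ.map (Y i) = expMeasure 1) {L : ℕ} (hLN : L ≤ N) (hL : 0 < L)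
    {w : Fin L → ℝ} (hw : ∀ k, 0 ≤ w k) (hw₀ : 0 < w ⟨0, hL⟩) {t : ℝ} (ht : 0 ≤ t) :
    μ {ω | ∑ k, w k * ordDesc (fun i => Y i ω) (Fin.castLE hLN k) ≤ t}
      ≤ ENNReal.ofReal (1 - exp (-(t / w ⟨0, hL⟩))) ^ N := by
  rw [← measure_forall_le_eq_pow hYm hind hlaw (div_nonneg ht hw₀.le)]
  refine measure_mono_ae ?_
  filter_upwards [ae_forall_nonneg_of_map_eq_expMeasure hYm hlaw] with ω hω hsum i
  rw [le_div_iff₀' hw₀]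
  exact mul_le_of_sum_mul_ordDesc_le hLN hL hω hw hsum i

lemma pow_le_measure_sum_ordDesc_rpow_le (hYm : ∀ i, Measurable (Y i)) (hind : iIndepFun Y μ)
    (hlaw : ∀ i, μ.map (Y i) = expMeasure 1) {L : ℕ} (hLN : L ≤ N) (hL : 0 < L) {p : ℝ}
    (hp : 0 < p) {s : ℝ} (hs : 0 ≤ s) :
    ENNReal.ofReal (1 - exp (-((s / L) ^ p⁻¹))) ^ N
      ≤ μ {ω | ∑ k : Fin L, ordDesc (fun i => Y i ω) (Fin.castLE hLN k) ^ p ≤ s} := by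
  have hsL : 0 ≤ s / L := by positivity
  rw [← measure_forall_le_eq_pow hYm hind hlaw (rpow_nonneg hsL _)]
  refine measure_mono_ae ?_
  filter_upwards [ae_forall_nonneg_of_map_eq_expMeasure hYm hlaw] with ω hω hle
  calc _ ≤ L * ((s / L) ^ p⁻¹) ^ p := sum_ordDesc_rpow_le hLN hω hle hp.le
    _ = s := by rw [rpow_inv_rpow hsL hp.ne', mul_div_cancel₀ _ (by positivity)]

end IIDExponential

lemma tendsto_one_sub_exp_neg_div_div_one_sub_exp_neg_div {a b : ℝ} (hb : b ≠ 0) :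
    Tendsto (fun t => (1 - exp (-(t / a))) / (1 - exp (-(t / b)))) (𝓝[>] 0) (𝓝 (b / a)) := by
  have hslope : ∀ c : ℝ,
      Tendsto (fun t => t⁻¹ • ((1 - exp (-((0 + t) / c))) - (1 - exp (-(0 / c))))) (𝓝[>] (0 : ℝ))
        (𝓝 c⁻¹) := fun c => by
    refine HasDerivAt.tendsto_slope_zero_right (f := fun t => 1 - exp (-(t / c))) ?_
    simpa using (((hasDerivAt_id (0 : ℝ)).div_const c).neg.exp.const_sub 1)
  refine ((hslope a).div (hslope b) (inv_ne_zero hb)).congr' ?_ |>.trans_eq ?_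
  · filter_upwards [self_mem_nhdsWithin] with t (ht : 0 < t)
    simp only [Pi.div_apply, zero_add, zero_div, neg_zero, exp_zero, sub_self, sub_zero,
      smul_eq_mul]
    rw [mul_div_mul_left _ _ (inv_ne_zero ht.ne')]
  · rw [inv_div_inv]

lemma tendsto_div_rpow_nhdsGT_zero {α η : ℝ} (hα : 0 < α) (hη : 0 < η) :
    Tendsto (fun γ : ℝ => (γ / η) ^ α) (𝓝[>] 0) (𝓝[>] 0) := by
  refine tendsto_nhdsWithin_iff.2 ⟨?_, ?_⟩
  · have hcont : ContinuousAt (fun γ : ℝ => (γ / η) ^ α) 0 :=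
      (continuousAt_id.div_const η).rpow_const (Or.inr hα.le)
    simpa [zero_rpow hα.ne'] using hcont.tendsto.mono_left nhdsWithin_le_nhds
  · filter_upwards [self_mem_nhdsWithin] with γ (hγ : 0 < γ)
    exact rpow_pos_of_pos (div_pos hγ hη) α

lemma limsup_div_le_of_le_one_sub_exp_pow {ι : Type*} {l : Filter ι} [l.NeBot]
    {f g : ι → ENNReal} {τ : ι → ℝ} (hτ : Tendsto τ l (𝓝[>] 0)) {a b : ℝ} (ha : 0 < a)
    (hb : 0 < b) (n : ℕ) (hf : ∀ᶠ x in l, f x ≤ ENNReal.ofReal (1 - exp (-(τ x / a))) ^ n)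
    (hg : ∀ᶠ x in l, ENNReal.ofReal (1 - exp (-(τ x / b))) ^ n ≤ g x) :
    limsup (fun x => f x / g x) l ≤ ENNReal.ofReal ((b / a) ^ n) := by
  set R : ℝ → ℝ := fun t => (1 - exp (-(t / a))) / (1 - exp (-(t / b)))
  have hR : Tendsto (fun x => ENNReal.ofReal (R (τ x) ^ n)) l (𝓝 (ENNReal.ofReal ((b / a) ^ n))) :=
    (ENNReal.tendsto_ofReal
      (((tendsto_one_sub_exp_neg_div_div_one_sub_exp_neg_div hb.ne').pow n).comp hτ))
  refine (limsup_le_limsup ?_).trans hR.limsup_eq.le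
  filter_upwards [hf, hg, eventually_mem_of_tendsto_nhdsWithin hτ] with x hfx hgx (hx : 0 < τ x)
  have hpos : ∀ c, 0 < c → 0 < 1 - exp (-(τ x / c)) := fun c hc => by
    simpa using div_pos hx hc
  calc f x / g x ≤ ENNReal.ofReal (1 - exp (-(τ x / a))) ^ n
        / ENNReal.ofReal (1 - exp (-(τ x / b))) ^ n := ENNReal.div_le_div hfx hgx
    _ = ENNReal.ofReal (R (τ x) ^ n) := by
      rw [← ENNReal.ofReal_pow (hpos a ha).le, ← ENNReal.ofReal_pow (hpos b hb).le,
        ← ENNReal.ofReal_div_of_pos (pow_pos (hpos b hb) n), div_pow]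

theorem stmt9_general {Ω : Type*} [MeasurableSpace Ω] (μ : Measure Ω)
    (N L : ℕ) (hL1 : 1 ≤ L) (hLN : L ≤ N)
    (α η : ℝ) (hα0 : 0 < α) (hη : 0 < η)
    (lam : Fin L → ℝ) (hpos : ∀ k, 0 < lam k)
    (Y : Fin N → Ω → ℝ) (hYm : ∀ i, Measurable (Y i))
    (hYindep : iIndepFun Y μ)
    (hYlaw : ∀ i, μ.map (Y i) = expMeasure 1) :
    Filter.limsup (fun γ : ℝ =>
        -- ℓ₁(γ) = P(∑_{k=1}^L λ_k^{1-α} Y^{(k)} ≤ (γ/η)^α)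
        μ {ω | ∑ k : Fin L,
            lam k ^ (1 - α) * ordDesc (fun i => Y i ω) (Fin.castLE hLN k) ≤ (γ / η) ^ α} /
        -- ℓ(γ) = P(∑_{k=1}^L (Y^{(k)})^{1/α} ≤ γ/η)
        μ {ω | ∑ k : Fin L,
            (ordDesc (fun i => Y i ω) (Fin.castLE hLN k)) ^ (1 / α) ≤ γ / η})
      (𝓝[>] (0:ℝ))
      ≤ ENNReal.ofReal ((L : ℝ) ^ (α * N) / lam ⟨0, hL1⟩ ^ ((N : ℝ) * (1 - α))) := by
  have hL : (0 : ℝ) < L := by exact_mod_cast hL1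
  have hlam₀ := hpos ⟨0, hL1⟩
  refine (limsup_div_le_of_le_one_sub_exp_pow (tendsto_div_rpow_nhdsGT_zero hα0 hη)
    (rpow_pos_of_pos hlam₀ (1 - α)) (rpow_pos_of_pos hL α) N ?_ ?_).trans_eq ?_
  · filter_upwards [self_mem_nhdsWithin] with γ (hγ : 0 < γ)
    exact measure_sum_mul_ordDesc_le_le_pow hYm hYindep hYlaw hLN hL1
      (fun k => (rpow_pos_of_pos (hpos k) _).le) (rpow_pos_of_pos hlam₀ _)
      (rpow_nonneg (div_nonneg hγ.le hη.le) _)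
  · filter_upwards [self_mem_nhdsWithin] with γ (hγ : 0 < γ)
    have hs : 0 ≤ γ / η := div_nonneg hγ.le hη.le
    simpa only [one_div, inv_inv, div_rpow hs hL.le] using
      pow_le_measure_sum_ordDesc_rpow_le hYm hYindep hYlaw hLN hL1 (one_div_pos.2 hα0) hs
  · rw [div_pow, ← rpow_natCast, ← rpow_natCast, ← rpow_mul hL.le, ← rpow_mul hlam₀.le,
      mul_comm (1 - α)]

/-- Bounded relative error of the IS estimator in the Weibull case (Proposition 3). -/
theorem stmt9 {Ω : Type*} [MeasurableSpace Ω] (μ : Measure Ω) [IsProbabilityMeasure μ]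
    (N L : ℕ) (hL1 : 1 ≤ L) (hLN : L ≤ N)
    (α η : ℝ) (hα0 : 0 < α) (hα1 : α < 1) (hη : 0 < η)
    (lam : Fin L → ℝ) (hpos : ∀ k, 0 < lam k) (hsum : ∑ k, lam k = 1)
    (Y : Fin N → Ω → ℝ) (hYm : ∀ i, Measurable (Y i))
    (hYindep : iIndepFun Y μ)
    (hYlaw : ∀ i, μ.map (Y i) = expMeasure 1) :
    Filter.limsup (fun γ : ℝ =>
        -- ℓ₁(γ) = P(∑_{k=1}^L λ_k^{1-α} Y^{(k)} ≤ (γ/η)^α)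
        μ {ω | ∑ k : Fin L,
            lam k ^ (1 - α) * ordDesc (fun i => Y i ω) (Fin.castLE hLN k) ≤ (γ / η) ^ α} /
        -- ℓ(γ) = P(∑_{k=1}^L (Y^{(k)})^{1/α} ≤ γ/η)
        μ {ω | ∑ k : Fin L,
            (ordDesc (fun i => Y i ω) (Fin.castLE hLN k)) ^ (1 / α) ≤ γ / η})
      (𝓝[>] (0:ℝ))
      ≤ ENNReal.ofReal ((L : ℝ) ^ (α * N) / lam ⟨0, hL1⟩ ^ ((N : ℝ) * (1 - α))) :=
  stmt9_general μ N L hL1 hLN α η hα0 hη lam hpos Y hYm hYindep hYlaw
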